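/- (Exact identity behind Lemma 5.1) With notation as above (r = (a₁,a₂)(b₁,b₂)(c), (a₁,a₂)≠(0,0), ω = (τ,1)(u,-τu-(z,z)/2)(z), τ₂>0), setting w = -a₂τ₂·z₁ + (a₂τ₁-a₁)·z₂ + τ₂·c ∈ Λ⊗ℝ and A = ⟨ω,r⟩, one has the identity: ũ₂ = (-⟨r,r⟩τ₂² + (w,w) + 2A₁a₂τ₂² - 2A₂a₂τ₁τ₂ + 2A₂a₁τ₂)/(2τ₂|a₂τ-a₁|²), where ũ₂ = (2τ₂u₂+(z₂,z₂))/(2τ₂), A = A₁ + iA₂, τ = τ₁+iτ₂, z = z₁+iz₂. -/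

import Mathlib

open Complex

/-- The ℂ-bilinear extension of the form on `Λ` (given by the real matrix `G`)
to `Λ ⊗ ℂ ≅ ℂ¹⁶`. -/
noncomputable def pairC (G : Matrix (Fin 16) (Fin 16) ℝ) (x y : Fin 16 → ℂ) : ℂ :=
  ∑ i : Fin 16, ∑ j : Fin 16, (G i j : ℂ) * x i * y j

/-- The real form on `Λ ⊗ ℝ ≅ ℝ¹⁶` given by `G`. -/
noncomputable def pairR (G : Matrix (Fin 16) (Fin 16) ℝ) (x y : Fin 16 → ℝ) : ℝ :=
  ∑ i : Fin 16, ∑ j : Fin 16, G i j * x i * y j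

/-- The ℂ-bilinear pairing on `L ⊗ ℂ` where `L = H ⊕ H ⊕ Λ`: an element
`(a₁,a₂)(b₁,b₂)(c)` denotes `a₁x₁+a₂x₂+b₁y₁+b₂y₂+c`, and
`⟨(a₁,a₂)(b₁,b₂)(c),(a₁',a₂')(b₁',b₂')(c')⟩ = a₁b₁'+a₂b₂'+b₁a₁'+b₂a₂'+(c,c')`. -/
noncomputable def pairL (G : Matrix (Fin 16) (Fin 16) ℝ)
    (a₁ a₂ b₁ b₂ : ℂ) (c : Fin 16 → ℂ)
    (a₁' a₂' b₁' b₂' : ℂ) (c' : Fin 16 → ℂ) : ℂ :=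
  a₁ * b₁' + a₂ * b₂' + b₁ * a₁' + b₂ * a₂' + pairC G c c'

/-!
After clearing the denominator `2τ₂|a₂τ - a₁|²`, which is nonzero because `τ ∉ ℝ` and
`(a₁,a₂) ≠ 0`, both sides are polynomials in the real coordinates of `τ`, `u` and in the
pairings among `z₁`, `z₂`, `c`: expand `A₁`, `A₂` and `(w,w)` in these coordinates, using
the symmetry of the form on `Λ` to identify `(z₁,z₂)` with `(z₂,z₁)` and so on.
-/

lemma pairC_re (G : Matrix (Fin 16) (Fin 16) ℝ) (x y : Fin 16 → ℂ) :
    (pairC G x y).re = pairR G (fun i => (x i).re) (fun i => (y i).re)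
      - pairR G (fun i => (x i).im) (fun i => (y i).im) := by
  simp only [pairC, pairR, re_sum, mul_re, mul_im, ofReal_re, ofReal_im,
    ← Finset.sum_sub_distrib]
  congr 1; ext i; congr 1; ext j; ring

lemma pairC_im (G : Matrix (Fin 16) (Fin 16) ℝ) (x y : Fin 16 → ℂ) :
    (pairC G x y).im = pairR G (fun i => (x i).re) (fun i => (y i).im)
      + pairR G (fun i => (x i).im) (fun i => (y i).re) := by
  simp only [pairC, pairR, im_sum, mul_re, mul_im, ofReal_re, ofReal_im,
    ← Finset.sum_add_distrib]
  congr 1; ext i; congr 1; ext j; ring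

lemma pairR_zero_right (G : Matrix (Fin 16) (Fin 16) ℝ) (x : Fin 16 → ℝ) :
    pairR G x (fun _ => 0) = 0 := by
  simp [pairR]

lemma pairR_comm (G : Matrix (Fin 16) (Fin 16) ℝ) (hsym : ∀ i j, G i j = G j i)
    (x y : Fin 16 → ℝ) : pairR G x y = pairR G y x := by
  simp only [pairR]
  rw [Finset.sum_comm]
  congr 1; ext i; congr 1; ext j
  rw [hsym j i]; ring

lemma pairR_linComb_self (G : Matrix (Fin 16) (Fin 16) ℝ) (hsym : ∀ i j, G i j = G j i)
    (α β γ : ℝ) (x y w : Fin 16 → ℝ) :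
    pairR G (fun i => α * x i + β * y i + γ * w i) (fun i => α * x i + β * y i + γ * w i)
      = α ^ 2 * pairR G x x + β ^ 2 * pairR G y y + γ ^ 2 * pairR G w w
        + 2 * α * β * pairR G x y + 2 * α * γ * pairR G x w + 2 * β * γ * pairR G y w := by
  have hexpand : pairR G (fun i => α * x i + β * y i + γ * w i)
        (fun i => α * x i + β * y i + γ * w i)
      = α * α * pairR G x x + α * β * pairR G x y + α * γ * pairR G x w
        + β * α * pairR G y x + β * β * pairR G y y + β * γ * pairR G y w
        + γ * α * pairR G w x + γ * β * pairR G w y + γ * γ * pairR G w w := by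
    simp only [pairR, Finset.mul_sum, ← Finset.sum_add_distrib]
    congr 1; ext i; congr 1; ext j; ring
  rw [hexpand, pairR_comm G hsym y x, pairR_comm G hsym w x, pairR_comm G hsym w y]
  ring

lemma pairL_omega (G : Matrix (Fin 16) (Fin 16) ℝ) (τ u : ℂ) (z : Fin 16 → ℂ)
    (a₁ a₂ b₁ b₂ : ℂ) (c : Fin 16 → ℂ) :
    pairL G τ 1 u (-τ * u - pairC G z z / 2) z a₁ a₂ b₁ b₂ c
      = b₁ * τ + b₂ + a₁ * u - a₂ * τ * u - a₂ / 2 * pairC G z z + pairC G z c := by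
  simp only [pairL]
  ring

section

variable (G : Matrix (Fin 16) (Fin 16) ℝ) (τ u : ℂ) (z : Fin 16 → ℂ)
  (a₁ a₂ b₁ b₂ : ℝ) (c : Fin 16 → ℝ)

lemma pairL_omega_re :
    (pairL G τ 1 u (-τ * u - pairC G z z / 2) z a₁ a₂ b₁ b₂ (fun i => (c i : ℂ))).re
      = b₁ * τ.re + b₂ + a₁ * u.re - a₂ * (τ.re * u.re - τ.im * u.im)
        - a₂ / 2 * (pairR G (fun i => (z i).re) (fun i => (z i).re)
          - pairR G (fun i => (z i).im) (fun i => (z i).im))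
        + pairR G (fun i => (z i).re) c := by
  rw [pairL_omega]
  simp only [add_re, sub_re, mul_re, mul_im, ofReal_re, ofReal_im, div_ofNat_re, div_ofNat_im,
    pairC_re, pairC_im, pairR_zero_right]
  ring

lemma pairL_omega_im :
    (pairL G τ 1 u (-τ * u - pairC G z z / 2) z a₁ a₂ b₁ b₂ (fun i => (c i : ℂ))).im
      = b₁ * τ.im + a₁ * u.im - a₂ * (τ.re * u.im + τ.im * u.re)
        - a₂ / 2 * (pairR G (fun i => (z i).re) (fun i => (z i).im)
          + pairR G (fun i => (z i).im) (fun i => (z i).re))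
        + pairR G (fun i => (z i).im) c := by
  rw [pairL_omega]
  simp only [add_im, sub_im, mul_im, mul_re, ofReal_re, ofReal_im, div_ofNat_re, div_ofNat_im,
    pairC_re, pairC_im, pairR_zero_right]
  ring

end

lemma ofReal_mul_sub_ofReal_ne_zero {a₁ a₂ : ℝ} (ha : ¬(a₁ = 0 ∧ a₂ = 0)) {τ : ℂ}
    (hτ : τ.im ≠ 0) :
    (a₂ : ℂ) * τ - a₁ ≠ 0 := by
  intro h
  have him : a₂ * τ.im = 0 := by simpa using congrArg im h
  have ha₂ : a₂ = 0 := (mul_eq_zero.mp him).resolve_right hτ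
  have hre : a₂ * τ.re - a₁ = 0 := by simpa using congrArg re h
  exact ha ⟨by simpa [ha₂] using hre, ha₂⟩

theorem stmt14_general (G : Matrix (Fin 16) (Fin 16) ℝ)
    (hsym : ∀ i j, G i j = G j i)
    (a₁ a₂ b₁ b₂ : ℤ) (c : Fin 16 → ℤ) (ha : ¬(a₁ = 0 ∧ a₂ = 0))
    (τ u : ℂ) (z : Fin 16 → ℂ) (hτ : 0 < τ.im) :
    (2 * τ.im * u.im + pairR G (fun i => (z i).im) (fun i => (z i).im))
        / (2 * τ.im)
      = (-(2 * ((a₁ : ℝ) * b₁ + (a₂ : ℝ) * b₂)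
              + pairR G (fun i => (c i : ℝ)) (fun i => (c i : ℝ))) * τ.im ^ 2
          + pairR G
              (fun i => -(a₂ : ℝ) * τ.im * (z i).re
                + ((a₂ : ℝ) * τ.re - (a₁ : ℝ)) * (z i).im + τ.im * (c i : ℝ))
              (fun i => -(a₂ : ℝ) * τ.im * (z i).re
                + ((a₂ : ℝ) * τ.re - (a₁ : ℝ)) * (z i).im + τ.im * (c i : ℝ))
          + 2 * (pairL G τ 1 u (-τ * u - pairC G z z / 2) z
              (a₁ : ℂ) (a₂ : ℂ) (b₁ : ℂ) (b₂ : ℂ) (fun i => (c i : ℂ))).re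
              * (a₂ : ℝ) * τ.im ^ 2
          - 2 * (pairL G τ 1 u (-τ * u - pairC G z z / 2) z
              (a₁ : ℂ) (a₂ : ℂ) (b₁ : ℂ) (b₂ : ℂ) (fun i => (c i : ℂ))).im
              * (a₂ : ℝ) * τ.re * τ.im
          + 2 * (pairL G τ 1 u (-τ * u - pairC G z z / 2) z
              (a₁ : ℂ) (a₂ : ℂ) (b₁ : ℂ) (b₂ : ℂ) (fun i => (c i : ℂ))).im
              * (a₁ : ℝ) * τ.im)
        / (2 * τ.im * Complex.normSq ((a₂ : ℂ) * τ - (a₁ : ℂ))) := by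
  have hd : 0 < Complex.normSq ((a₂ : ℂ) * τ - (a₁ : ℂ)) := normSq_pos.mpr <| by
    exact_mod_cast ofReal_mul_sub_ofReal_ne_zero (a₁ := a₁) (a₂ := a₂)
      (by exact_mod_cast ha) hτ.ne'
  have hA₁ := pairL_omega_re G τ u z a₁ a₂ b₁ b₂ (fun i => c i)
  have hA₂ := pairL_omega_im G τ u z a₁ a₂ b₁ b₂ (fun i => c i)
  push_cast at hA₁ hA₂
  rw [div_eq_div_iff (by positivity) (mul_pos (by positivity) hd).ne', hA₁, hA₂,
    pairR_linComb_self G hsym (-(a₂ : ℝ) * τ.im) ((a₂ : ℝ) * τ.re - a₁) τ.im,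
    pairR_comm G hsym (fun i => (z i).im) (fun i => (z i).re)]
  simp only [normSq_apply, sub_re, sub_im, mul_re, mul_im, intCast_re, intCast_im]
  ring

/-- Exact identity behind Lemma 5.1: with `w = -a₂τ₂z₁ + (a₂τ₁-a₁)z₂ + τ₂c` and
`A = ⟨ω,r⟩ = A₁ + iA₂`, one has
`ũ₂ = (-⟨r,r⟩τ₂² + (w,w) + 2A₁a₂τ₂² - 2A₂a₂τ₁τ₂ + 2A₂a₁τ₂)/(2τ₂|a₂τ-a₁|²)`. -/
theorem stmt14 (G : Matrix (Fin 16) (Fin 16) ℝ)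
    (hsym : ∀ i j, G i j = G j i)
    (hneg : ∀ v : Fin 16 → ℝ, v ≠ 0 → pairR G v v < 0)
    (a₁ a₂ b₁ b₂ : ℤ) (c : Fin 16 → ℤ) (ha : ¬(a₁ = 0 ∧ a₂ = 0))
    (τ u : ℂ) (z : Fin 16 → ℂ) (hτ : 0 < τ.im) :
    (2 * τ.im * u.im + pairR G (fun i => (z i).im) (fun i => (z i).im))
        / (2 * τ.im)
      = (-(2 * ((a₁ : ℝ) * b₁ + (a₂ : ℝ) * b₂)
              + pairR G (fun i => (c i : ℝ)) (fun i => (c i : ℝ))) * τ.im ^ 2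
          + pairR G
              (fun i => -(a₂ : ℝ) * τ.im * (z i).re
                + ((a₂ : ℝ) * τ.re - (a₁ : ℝ)) * (z i).im + τ.im * (c i : ℝ))
              (fun i => -(a₂ : ℝ) * τ.im * (z i).re
                + ((a₂ : ℝ) * τ.re - (a₁ : ℝ)) * (z i).im + τ.im * (c i : ℝ))
          + 2 * (pairL G τ 1 u (-τ * u - pairC G z z / 2) z
              (a₁ : ℂ) (a₂ : ℂ) (b₁ : ℂ) (b₂ : ℂ) (fun i => (c i : ℂ))).re
              * (a₂ : ℝ) * τ.im ^ 2
          - 2 * (pairL G τ 1 u (-τ * u - pairC G z z / 2) z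
              (a₁ : ℂ) (a₂ : ℂ) (b₁ : ℂ) (b₂ : ℂ) (fun i => (c i : ℂ))).im
              * (a₂ : ℝ) * τ.re * τ.im
          + 2 * (pairL G τ 1 u (-τ * u - pairC G z z / 2) z
              (a₁ : ℂ) (a₂ : ℂ) (b₁ : ℂ) (b₂ : ℂ) (fun i => (c i : ℂ))).im
              * (a₁ : ℝ) * τ.im)
        / (2 * τ.im * Complex.normSq ((a₂ : ℂ) * τ - (a₁ : ℂ))) :=
  stmt14_general G hsym a₁ a₂ b₁ b₂ c ha τ u z hτ
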